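/- arXiv:1009.6114 — 4 statements merged into one kernel-verified Lean document; each statement's English description precedes it below -/
import Mathlib

section
/- Horspool's shift function is safe: for any text s, pattern p of length m, and position t with m-1 ≤ t, there is no occurrence of p in s ending at a position t' with t < t' < t + shift(p, s[t-m+1..t]). -/
/-- Safety of the Horspool shift: if the window ends at position `t` (with `m-1 ≤ t`)
in the text `s`, then there is no occurrence of `p` ending at a position `t'` with
`t < t' < t + shift(p, s[t-m+1..t])`. -/
theorem horspool_shift_safe (A : Type) [DecidableEq A] (m : ℕ) (hm : 1 ≤ m)
    (p s : ℕ → A) (t : ℕ) (ht : m - 1 ≤ t)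
    (rightpos : ℤ)
    (hr : rightpos =
      (insert (-1 : ℤ)
        (((Finset.range (m - 1)).filter (fun i => p i = s t)).image
          (fun i : ℕ => (i : ℤ)))).max' (Finset.insert_nonempty _ _))
    (shift : ℤ) (hs : shift = ((m : ℤ) - 1) - rightpos)
    (t' : ℕ) (h1 : t < t') (h2 : (t' : ℤ) < (t : ℤ) + shift)
    (hocc : ∀ j < m, s (t' - (m - 1) + j) = p j) :
    False := by
  obtain ⟨k, rfl⟩ : ∃ k, m = k + 1 := ⟨m - 1, (Nat.succ_pred_eq_of_pos hm).symm⟩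
  simp only [Nat.add_sub_cancel] at hr hocc ht
  have hrneg : (-1 : ℤ) ≤ rightpos := by
    rw [hr]; exact Finset.le_max' _ _ (Finset.mem_insert_self _ _)
  have hkt : (t' : ℤ) ≤ (t : ℤ) + k := by
    push_cast at hs h2 ⊢; linarith
  have ht'k : t' ≤ t + k := by exact_mod_cast hkt
  set j : ℕ := t + k - t' with hj
  have hjZ : (j : ℤ) = (t : ℤ) + k - t' := by
    have : (j : ℤ) = ((t + k : ℕ) : ℤ) - (t' : ℕ) := by
      rw [hj]; exact_mod_cast Int.ofNat_sub ht'k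
    push_cast at this ⊢; linarith
  have hjk : j < k := by omega
  have hidx : t' - k + j = t := by omega
  have hpj : p j = s t := by
    have := hocc j (by omega)
    rw [hidx] at this; exact this.symm
  have hmem : (j : ℤ) ∈ insert (-1 : ℤ)
      (((Finset.range k).filter (fun i => p i = s t)).image (fun i : ℕ => (i : ℤ))) := by
    refine Finset.mem_insert_of_mem ?_
    exact Finset.mem_image_of_mem _ (Finset.mem_filter.2 ⟨Finset.mem_range.2 hjk, hpj⟩)
  have hle : (j : ℤ) ≤ rightpos := by rw [hr]; exact Finset.le_max' _ _ hmem
  push_cast at hs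
  linarith
end

section
/- The DAA constructed for analyzing a window-based pattern matching algorithm computes the total cost: for every text s ∈ Σ*, value_D(s) equals the sum of cost(p, s[i-m+1..i]) over all examined window end positions i ∈ I_s, where I_s is the set generated by starting at m-1 and repeatedly adding the shift of the current window. -/
/-- The window of length `m` ending at position `i` in the text `s`. -/
def window {A : Type} (m : ℕ) (s : ℕ → A) (i : ℕ) : Fin m → A :=
  fun j => s (i + 1 - m + j)

/-- The set `I_s` of examined window end positions for a window-based pattern
matching algorithm on a text of length `n`: it contains `m-1` (provided `m-1 < n`)
and is closed under `i ↦ i + shiftAt i` while that stays `< n`. -/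
inductive Examined (m n : ℕ) (shiftAt : ℕ → ℕ) : ℕ → Prop
  | base : m - 1 < n → Examined m n shiftAt (m - 1)
  | step (i : ℕ) : Examined m n shiftAt i → i + shiftAt i < n →
      Examined m n shiftAt (i + shiftAt i)

/-- One step of the DAA for pattern matching analysis, together with the value
(accumulated cost).  The state is `((w, x), v)` where `w ∈ Σ^m` is the window
content, `x ∈ {0,…,m}` counts the characters left until the end of the current
window, and `v` is the accumulated cost.  The emission of state `(w,x)` is
`cost(w)` if `x = 0` and `0` otherwise; the operation is addition. -/
def pmStep {A : Type} (m : ℕ) (shift cost : (Fin m → A) → ℕ) :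
    (((Fin m → A) × ℕ) × ℕ) → A → (((Fin m → A) × ℕ) × ℕ) :=
  fun st σ =>
    let w' : Fin m → A := fun j => if h : (j : ℕ) + 1 < m then st.1.1 ⟨j + 1, h⟩ else σ
    let x' : ℕ := if st.1.2 = 0 then shift st.1.1 - 1 else st.1.2 - 1
    ((w', x'), st.2 + if x' = 0 then cost w' else 0)

/-- Position of the end of the current window after `k` steps. -/
def posE (m : ℕ) (f : ℕ → ℕ) : ℕ → ℕ
  | 0 => m - 1
  | k + 1 => if posE m f k < k then posE m f k + f (posE m f k) else posE m f k

lemma posE_zero (m : ℕ) (f : ℕ → ℕ) : posE m f 0 = m - 1 := rfl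

lemma posE_succ (m : ℕ) (f : ℕ → ℕ) (k : ℕ) :
    posE m f (k + 1) =
      if posE m f k < k then posE m f k + f (posE m f k) else posE m f k := rfl

lemma posE_ge (m : ℕ) (f : ℕ → ℕ) (hf : ∀ i, 1 ≤ f i) : ∀ k, k ≤ posE m f k + 1 := by
  intro k
  induction k with
  | zero => omega
  | succ k ih =>
    rw [posE_succ]
    by_cases h : posE m f k < k
    · rw [if_pos h]; have := hf (posE m f k); omega
    · rw [if_neg h]; omega

lemma posE_ge_m (m : ℕ) (f : ℕ → ℕ) : ∀ k, m - 1 ≤ posE m f k := by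
  intro k
  induction k with
  | zero => rw [posE_zero]
  | succ k ih =>
    rw [posE_succ]
    by_cases h : posE m f k < k
    · rw [if_pos h]; omega
    · rw [if_neg h]; omega

lemma posE_stable (m : ℕ) (f : ℕ → ℕ) (a b : ℕ) (hab : posE m f a = b) :
    ∀ c, a ≤ c → c ≤ b + 1 → posE m f c = b := by
  intro c hac hcb
  induction c, hac using Nat.le_induction with
  | base => exact hab
  | succ c hc ih =>
    have hcb' : c ≤ b := by omega
    have h1 : posE m f c = b := ih (by omega)
    rw [posE_succ, h1, if_neg (by omega)]

lemma examined_posE (m n : ℕ) (hm : 1 ≤ m) (f : ℕ → ℕ) (hf : ∀ i, 1 ≤ f i)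
    (i : ℕ) (h : Examined m n f i) : posE m f (i + 1) = i := by
  induction h with
  | base hn =>
    exact posE_stable m f 0 (m - 1) rfl (m - 1 + 1) (by omega) (by omega)
  | step i hi hlt ih =>
    have h2 : posE m f (i + 2) = i + f i := by
      rw [posE_succ, ih, if_pos (by omega)]
    exact posE_stable m f (i + 2) (i + f i) h2 (i + f i + 1) (by have := hf i; omega)
      (by omega)

lemma posE_reached (m n : ℕ) (hm : 1 ≤ m) (f : ℕ → ℕ) (hf : ∀ i, 1 ≤ f i) :
    ∀ k, k ≤ n → posE m f k = m - 1 ∨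
      ∃ j, Examined m n f j ∧ posE m f k = j + f j := by
  intro k
  induction k with
  | zero => intro _; left; rfl
  | succ k ih =>
    intro hk
    by_cases h : posE m f k < k
    · have hge := posE_ge m f hf k
      have hEk : posE m f k = k - 1 := by omega
      have hk1 : 1 ≤ k := by omega
      have hex : Examined m n f (k - 1) := by
        rcases ih (by omega) with h1 | ⟨j, hj, hjk⟩
        · rw [hEk] at h1; rw [h1]; exact Examined.base (by omega)
        · have : k - 1 = j + f j := by omega
          rw [this]; exact Examined.step j hj (by omega)
      right
      exact ⟨k - 1, hex, by rw [posE_succ, if_pos h, hEk]⟩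
    · rw [posE_succ, if_neg h]
      exact ih (by omega)

lemma posE_iff_examined (m n : ℕ) (hm : 1 ≤ m) (f : ℕ → ℕ) (hf : ∀ i, 1 ≤ f i)
    (i : ℕ) (hi : i < n) : posE m f (i + 1) = i ↔ Examined m n f i := by
  constructor
  · intro h
    rcases posE_reached m n hm f hf (i + 1) (by omega) with h1 | ⟨j, hj, hjk⟩
    · rw [h] at h1; rw [h1]; exact Examined.base (by omega)
    · rw [h] at hjk; rw [hjk]; exact Examined.step j hj (by omega)
  · exact examined_posE m n hm f hf i

/-- The window component of the DAA state after `k` steps. -/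
def Wst {A : Type} (m : ℕ) (p : Fin m → A) (s : ℕ → A) (k : ℕ) : Fin m → A :=
  fun j => if h : k + (j : ℕ) < m then p ⟨k + j, h⟩ else s (k + j - m)

lemma Wst_eq_window {A : Type} (m : ℕ) (p : Fin m → A) (s : ℕ → A) (k : ℕ)
    (hk : m ≤ k) : Wst m p s k = window m s (k - 1) := by
  funext j
  have hj := j.2
  simp only [Wst, window]
  rw [dif_neg (by omega)]
  congr 1
  omega

lemma fold_inv {A : Type} (m : ℕ) (hm : 1 ≤ m) (p : Fin m → A)
    (shift cost : (Fin m → A) → ℕ) (hshift : ∀ w, 1 ≤ shift w ∧ shift w ≤ m)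
    (s : ℕ → A) (k : ℕ) :
    (List.ofFn (fun j : Fin k => s j)).foldl (pmStep m shift cost) ((p, m), 0) =
      ((Wst m p s k, posE m (fun i => shift (window m s i)) k + 1 - k),
        ∑ i ∈ Finset.range k,
          if posE m (fun i => shift (window m s i)) (i + 1) = i
          then cost (window m s i) else 0) := by
  set f : ℕ → ℕ := fun i => shift (window m s i) with hf
  induction k with
  | zero =>
    simp only [List.ofFn_zero, List.foldl_nil, Finset.range_zero, Finset.sum_empty]
    have hW : Wst m p s 0 = p := by
      funext j
      simp only [Wst]
      rw [dif_pos (show 0 + (j : ℕ) < m by omega)]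
      exact congrArg p (Fin.ext (show 0 + (j : ℕ) = (j : ℕ) by omega))
    rw [hW, posE_zero]
    have : m - 1 + 1 - 0 = m := by omega
    rw [this]
  | succ k ih =>
    rw [List.ofFn_succ', List.concat_eq_append, List.foldl_concat]
    have hlast : (Fin.last k : ℕ) = k := rfl
    have hcast : (List.ofFn fun i : Fin k => s ((Fin.castSucc i : Fin (k+1)) : ℕ)) =
        List.ofFn fun j : Fin k => s j := by
      congr 1
    rw [hcast, ih]
    simp only [pmStep, hlast]
    have hW : (fun j : Fin m => if h : (j : ℕ) + 1 < m then
        Wst m p s k ⟨(j : ℕ) + 1, h⟩ else s k) = Wst m p s (k + 1) := by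
      funext j
      have hj := j.2
      by_cases h : (j : ℕ) + 1 < m
      · rw [dif_pos h]
        simp only [Wst]
        by_cases h2 : k + ((j : ℕ) + 1) < m
        · rw [dif_pos h2, dif_pos (show k + 1 + (j : ℕ) < m by omega)]
          exact congrArg p (Fin.ext (show k + ((j : ℕ) + 1) = k + 1 + (j : ℕ) by omega))
        · rw [dif_neg h2, dif_neg (by omega)]
          congr 1
          omega
      · rw [dif_neg h]
        simp only [Wst]
        rw [dif_neg (by omega)]
        congr 1
        omega
    rw [hW]
    have hfk : ∀ i, 1 ≤ f i := fun i => (hshift (window m s i)).1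
    have hge := posE_ge m f hfk k
    have hge1 := posE_ge m f hfk (k + 1)
    have hgem := posE_ge_m m f k
    have hgem1 := posE_ge_m m f (k + 1)
    by_cases h : posE m f k < k
    · -- window just ended at k - 1
      have hEk : posE m f k = k - 1 := by omega
      have hkm : m ≤ k := by omega
      have hx0 : posE m f k + 1 - k = 0 := by omega
      have hE1 : posE m f (k + 1) = k - 1 + f (k - 1) := by
        rw [posE_succ, if_pos h, hEk]
      have hsh : shift (Wst m p s k) = f (k - 1) := by
        rw [Wst_eq_window m p s k hkm]
      rw [hx0]
      simp only [↓reduceIte]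
      rw [hsh]
      have hx' : f (k - 1) - 1 = posE m f (k + 1) + 1 - (k + 1) := by
        have := hfk (k - 1); omega
      rw [hx']
      have hsummand : (if posE m f (k + 1) + 1 - (k + 1) = 0
            then cost (Wst m p s (k + 1)) else 0) =
          (if posE m f (k + 1) = k then cost (window m s k) else 0) := by
        by_cases hc : posE m f (k + 1) = k
        · rw [if_pos (by omega), if_pos hc,
            Wst_eq_window m p s (k + 1) (by omega), Nat.add_sub_cancel]
        · rw [if_neg (by omega), if_neg hc]
      rw [hsummand, Finset.sum_range_succ]
    · -- still inside the window
      have hx : posE m f k + 1 - k ≠ 0 := by omega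
      have hE1 : posE m f (k + 1) = posE m f k := by
        rw [posE_succ, if_neg h]
      rw [if_neg hx]
      have hx1 : posE m f k + 1 - k - 1 = posE m f (k + 1) + 1 - (k + 1) := by
        rw [hE1]; omega
      rw [hx1]
      have hsummand : (if posE m f (k + 1) + 1 - (k + 1) = 0
            then cost (Wst m p s (k + 1)) else 0) =
          (if posE m f (k + 1) = k then cost (window m s k) else 0) := by
        by_cases hc : posE m f (k + 1) = k
        · rw [if_pos (by omega), if_pos hc,
            Wst_eq_window m p s (k + 1) (by omega), Nat.add_sub_cancel]
        · rw [if_neg (by omega), if_neg hc]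
      rw [hsummand, Finset.sum_range_succ]

open Classical in
/-- The DAA computes the total cost: its value on the length-`n` text equals the sum
of the window costs over all examined window end positions `i ∈ I_s`. -/
theorem daa_computes_total_cost {A : Type} (m n : ℕ) (hm : 1 ≤ m)
    (p : Fin m → A) (shift cost : (Fin m → A) → ℕ)
    (hshift : ∀ w, 1 ≤ shift w ∧ shift w ≤ m)
    (s : ℕ → A) :
    ((List.ofFn (fun k : Fin n => s k)).foldl (pmStep m shift cost) ((p, m), 0)).2 =
      ∑ i ∈ Finset.range n,
        if Examined m n (fun i => shift (window m s i)) i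
        then cost (window m s i) else 0 := by
  rw [fold_inv m hm p shift cost hshift s n]
  exact Finset.sum_congr rfl fun i hi =>
    if_congr (posE_iff_examined m n hm _ (fun i => (hshift (window m s i)).1) i
      (Finset.mem_range.mp hi)) rfl rfl
end

section
/- In the pattern-matching DAA construction, the set of positions at which the counter component is 0 equals the set of examined window end positions: {i : x_i = 0} = I_s, where (w_i, x_i) is the state after reading s[0..i]. -/
/-- The DAA state after reading `s[0..i]`. -/
def daaSt {A : Type} (m : ℕ) (p : Fin m → A) (shift cost : (Fin m → A) → ℕ)
    (s : ℕ → A) (i : ℕ) : ((Fin m → A) × ℕ) × ℕ :=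
  (List.ofFn (fun k : Fin (i + 1) => s k)).foldl (pmStep m shift cost) ((p, m), 0)

lemma daaSt_succ {A : Type} (m : ℕ) (p : Fin m → A) (shift cost : (Fin m → A) → ℕ)
    (s : ℕ → A) (i : ℕ) :
    daaSt m p shift cost s (i + 1) =
      pmStep m shift cost (daaSt m p shift cost s i) (s (i + 1)) := by
  unfold daaSt
  rw [List.ofFn_succ']
  simp [List.foldl_concat]

lemma daaSt_zero {A : Type} (m : ℕ) (p : Fin m → A) (shift cost : (Fin m → A) → ℕ)
    (s : ℕ → A) :
    daaSt m p shift cost s 0 = pmStep m shift cost ((p, m), 0) (s 0) := by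
  unfold daaSt
  simp

lemma daaSt_window {A : Type} (m : ℕ) (p : Fin m → A) (shift cost : (Fin m → A) → ℕ)
    (s : ℕ → A) :
    ∀ i (j : Fin m), m ≤ i + 1 + j → (daaSt m p shift cost s i).1.1 j = s (i + 1 + j - m) := by
  intro i
  induction i with
  | zero =>
    intro j hj
    rw [daaSt_zero]
    have hjm : (j : ℕ) < m := j.isLt
    have : ¬ ((j : ℕ) + 1 < m) := by omega
    simp only [pmStep, this, dif_neg, not_false_iff]
    congr 1
    omega
  | succ i ih =>
    intro j hj
    rw [daaSt_succ]
    by_cases h : (j : ℕ) + 1 < m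
    · simp only [pmStep, dif_pos h]
      have := ih ⟨j + 1, h⟩ (by simp; omega)
      simp at this
      rw [this]
      congr 1
      omega
    · simp only [pmStep, dif_neg h]
      congr 1
      have hjm : (j : ℕ) < m := j.isLt
      omega

lemma daaSt_window' {A : Type} (m : ℕ) (p : Fin m → A) (shift cost : (Fin m → A) → ℕ)
    (s : ℕ → A) (i : ℕ) (hi : m ≤ i + 1) :
    (daaSt m p shift cost s i).1.1 = window m s i := by
  funext j
  rw [daaSt_window m p shift cost s i j (by omega)]
  unfold window
  congr 1
  omega

lemma daaSt_counter_start {A : Type} (m : ℕ) (p : Fin m → A) (shift cost : (Fin m → A) → ℕ)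
    (s : ℕ → A) (hm : 1 ≤ m) :
    ∀ i, i ≤ m - 1 → (daaSt m p shift cost s i).1.2 = m - 1 - i := by
  intro i
  induction i with
  | zero =>
    intro _
    rw [daaSt_zero]
    simp only [pmStep]
    have : m ≠ 0 := by omega
    simp [this]
  | succ i ih =>
    intro hle
    rw [daaSt_succ]
    have h1 := ih (by omega)
    simp only [pmStep]
    have hne : (daaSt m p shift cost s i).1.2 ≠ 0 := by omega
    rw [if_neg hne, h1]
    omega

lemma daaSt_counter_after {A : Type} (m : ℕ) (p : Fin m → A) (shift cost : (Fin m → A) → ℕ)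
    (s : ℕ → A) (i : ℕ) (h0 : (daaSt m p shift cost s i).1.2 = 0) :
    ∀ k, 1 ≤ k → k ≤ shift ((daaSt m p shift cost s i).1.1) →
      (daaSt m p shift cost s (i + k)).1.2 = shift ((daaSt m p shift cost s i).1.1) - k := by
  intro k
  induction k with
  | zero => omega
  | succ k ih =>
    intro _ hk2
    rcases Nat.eq_zero_or_pos k with hk0 | hkpos
    · subst hk0
      rw [daaSt_succ]
      simp only [pmStep, h0, if_pos]
    · have hprev := ih hkpos (by omega)
      have : i + (k + 1) = (i + k) + 1 := by omega
      rw [this, daaSt_succ]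
      simp only [pmStep]
      have hne : (daaSt m p shift cost s (i + k)).1.2 ≠ 0 := by omega
      rw [if_neg hne, hprev]
      omega

/-- The positions where the counter component of the DAA state is `0` are exactly the
examined window end positions: `{i : x_i = 0} = I_s`. -/
theorem daa_counter_zero_iff_examined {A : Type} (m n : ℕ) (hm : 1 ≤ m)
    (p : Fin m → A) (shift cost : (Fin m → A) → ℕ)
    (hshift : ∀ w, 1 ≤ shift w ∧ shift w ≤ m)
    (s : ℕ → A) (i : ℕ) (hi : i < n) :
    ((List.ofFn (fun k : Fin (i + 1) => s k)).foldl (pmStep m shift cost) ((p, m), 0)).1.2 = 0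
      ↔ Examined m n (fun j => shift (window m s j)) i := by
  have hX := daaSt_counter_start m p shift cost s hm
  have hzero_ge : ∀ j, (daaSt m p shift cost s j).1.2 = 0 → m - 1 ≤ j := by
    intro j hj
    by_contra h
    have := hX j (by omega)
    omega
  -- backward direction
  have hback : ∀ i, Examined m n (fun j => shift (window m s j)) i →
      (daaSt m p shift cost s i).1.2 = 0 := by
    intro i hE
    induction hE with
    | base h =>
      have := hX (m - 1) le_rfl
      omega
    | step j hEj hjn ihj =>
      have hjm : m - 1 ≤ j := hzero_ge j ihj
      have hw : (daaSt m p shift cost s j).1.1 = window m s j :=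
        daaSt_window' m p shift cost s j (by omega)
      have hσ1 : 1 ≤ shift ((daaSt m p shift cost s j).1.1) := (hshift _).1
      have hafter := daaSt_counter_after m p shift cost s j ihj
        (shift ((daaSt m p shift cost s j).1.1)) hσ1 le_rfl
      show (daaSt m p shift cost s (j + shift (window m s j))).1.2 = 0
      rw [← hw]
      omega
  -- forward direction
  have hfwd : ∀ i, i < n → (daaSt m p shift cost s i).1.2 = 0 →
      Examined m n (fun j => shift (window m s j)) i := by
    intro i
    induction i using Nat.strong_induction_on with
    | _ i IH =>
      intro hin h0
      have him : m - 1 ≤ i := hzero_ge i h0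
      rcases eq_or_lt_of_le him with heq | hgt
      · rw [← heq]
        exact Examined.base (heq ▸ hin)
      · set P : ℕ → Prop := fun j => (daaSt m p shift cost s j).1.2 = 0 with hP
        have hPm : P (m - 1) := by
          have := hX (m - 1) le_rfl
          simp only [hP]
          omega
        have hm1le : m - 1 ≤ i - 1 := by omega
        have hP0 : P (Nat.findGreatest P (i - 1)) := Nat.findGreatest_spec hm1le hPm
        set i0 := Nat.findGreatest P (i - 1) with hi0
        have hi0ge : m - 1 ≤ i0 := Nat.le_findGreatest hm1le hPm
        have hi0lt : i0 < i := lt_of_le_of_lt (Nat.findGreatest_le _) (by omega)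
        set σ := shift ((daaSt m p shift cost s i0).1.1) with hσ
        have hσ1 : 1 ≤ σ := (hshift _).1
        have hieq : i = i0 + σ := by
          by_contra hne
          rcases Nat.lt_or_ge i (i0 + σ) with hlt' | hge'
          · have := daaSt_counter_after m p shift cost s i0 hP0 (i - i0) (by omega) (by omega)
            have heq2 : i0 + (i - i0) = i := by omega
            rw [heq2] at this
            omega
          · have hz : P (i0 + σ) := by
              have := daaSt_counter_after m p shift cost s i0 hP0 σ hσ1 le_rfl
              simp only [hP]
              omega
            exact Nat.findGreatest_is_greatest (show i0 < i0 + σ by omega) (by omega) hz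
        have hE0 : Examined m n (fun j => shift (window m s j)) i0 :=
          IH i0 hi0lt (by omega) hP0
        have hw : (daaSt m p shift cost s i0).1.1 = window m s i0 :=
          daaSt_window' m p shift cost s i0 (by omega)
        have hσw : shift (window m s i0) = σ := by rw [← hw]
        have hstep := Examined.step (shiftAt := fun j => shift (window m s j)) i0 hE0
          (by simpa [hσw] using (show i0 + σ < n by omega))
        have hfin : i0 + (fun j => shift (window m s j)) i0 = i := by
          simp only [hσw]
          omega
        exact hfin ▸ hstep
  exact ⟨fun h => hfwd i hi h, fun h => hback i h⟩
end

section
/- PAA construction from a DAA and a text model is correct: defining the PAA with product states Q^D × C, transition T((q,c),(q',c')) = Σ_{σ : δ(q,σ)=q'} φ(c,σ,c'), deterministic emissions μ_{(q,c)} = point mass at η_q, and operations θ_{(q,c)} = θ^D_q, one has L(V_t) = L(value_D(S_0 ... S_{t-1})) for all t, where S is a random text drawn from the text model. More precisely, P(Q^PAA_t = (q,c), V_t = v) = Σ_{s ∈ Σ^t} [δ̂((q0^D, v0), s) = (q, v)] · P(S_0...S_{t-1} = s, C_t = c). -/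
/-- Joint transition step of a DAA: `δ̂((q,v),σ) = (δ(q,σ), θ_{δ(q,σ)}(v, η_{δ(q,σ)}))`. -/
def daaStep {A Q V E : Type} (δ : Q → A → Q) (η : Q → E) (θ : Q → V → E → V)
    (qv : Q × V) (σ : A) : Q × V :=
  let q' := δ qv.1 σ
  (q', θ q' qv.2 (η q'))

/-- `δ̂` extended to strings. -/
def daaRun {A Q V E : Type} (δ : Q → A → Q) (η : Q → E) (θ : Q → V → E → V)
    (qv : Q × V) (s : List A) : Q × V :=
  s.foldl (daaStep δ η θ) qv

/-- `textWeight φ c s c'`: probability that the finite-memory text model generates `s`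
from context `c` and ends in context `c'`. -/
def textWeight {A C : Type} [Fintype C] [DecidableEq C]
    (φ : C → A → C → ℝ) : C → List A → C → ℝ
  | c, [], c' => if c' = c then 1 else 0
  | c, a :: s, c' => ∑ c'' : C, φ c a c'' * textWeight φ c'' s c'

/-- Probability of a PAA trajectory. -/
def trajProb {Q E : Type} (T : Q → Q → ℝ) (μ : Q → E → ℝ) : Q → List (Q × E) → ℝ
  | _, [] => 1
  | q, (q', e) :: rest => T q q' * μ q' e * trajProb T μ q' rest

/-- Final state of a trajectory. -/
def trajState {Q E : Type} : Q → List (Q × E) → Q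
  | q, [] => q
  | _, (q', _) :: rest => trajState q' rest

/-- Value computed along a trajectory. -/
def trajValue {Q E V : Type} (θ : Q → V → E → V) : V → List (Q × E) → V
  | v, [] => v
  | v, (q', e) :: rest => trajValue θ (θ q' v e) rest

/-- `f_t(q,v) = P(Q_t = q, V_t = v)` for the PAA processes. -/
def paaF {Q E V : Type} [Fintype Q] [Fintype E] [DecidableEq Q] [DecidableEq V]
    (T : Q → Q → ℝ) (μ : Q → E → ℝ) (θ : Q → V → E → V) (q0 : Q) (v0 : V)
    (t : ℕ) (q : Q) (v : V) : ℝ :=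
  ∑ τ : Fin t → Q × E,
    if trajState q0 (List.ofFn τ) = q ∧ trajValue θ v0 (List.ofFn τ) = v
    then trajProb T μ q0 (List.ofFn τ) else 0

lemma sum_ofFn_succ {X : Type} [Fintype X] (t : ℕ) (f : List X → ℝ) :
    ∑ τ : Fin (t+1) → X, f (List.ofFn τ)
      = ∑ x : X, ∑ τ : Fin t → X, f (x :: List.ofFn τ) := by
  have h : ∑ p : X × (Fin t → X), f (p.1 :: List.ofFn p.2)
      = ∑ τ : Fin (t+1) → X, f (List.ofFn τ) := by
    apply Fintype.sum_equiv (Fin.consEquiv fun _ => X)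
    intro p
    congr 1
    simp [Fin.consEquiv, List.ofFn_succ, Fin.cons_zero, Fin.cons_succ]
  rw [← h, Fintype.sum_prod_type]

lemma paa_key {A QD C V E : Type}
    [Fintype A] [Fintype QD] [Fintype C] [Fintype E]
    [DecidableEq A] [DecidableEq QD] [DecidableEq C] [DecidableEq V] [DecidableEq E]
    (δ : QD → A → QD) (η : QD → E) (θ : QD → V → E → V)
    (φ : C → A → C → ℝ) (q : QD) (c : C) (v : V) :
    ∀ (t : ℕ) (q0D : QD) (c0 : C) (v0 : V),
    paaF
      (fun qc qc' => ∑ σ : A, if δ qc.1 σ = qc'.1 then φ qc.2 σ qc'.2 else 0)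
      (fun qc e => if e = η qc.1 then 1 else 0)
      (fun qc v e => θ qc.1 v e)
      (q0D, c0) v0 t (q, c) v =
    ∑ s : Fin t → A,
      (if daaRun δ η θ (q0D, v0) (List.ofFn s) = (q, v) then 1 else 0) *
        textWeight φ c0 (List.ofFn s) c := by
  intro t
  induction t with
  | zero =>
    intro q0D c0 v0
    simp [paaF, daaRun, textWeight, trajState, trajValue, trajProb, Prod.ext_iff]
    split_ifs <;> simp_all
  | succ t ih =>
    intro q0D c0 v0
    have L := sum_ofFn_succ (X := (QD × C) × E) t
      (fun l => if trajState (q0D, c0) l = (q, c) ∧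
          trajValue (fun (qc : QD × C) v e => θ qc.1 v e) v0 l = v
        then trajProb
          (fun qc qc' => ∑ σ : A, if δ qc.1 σ = qc'.1 then φ qc.2 σ qc'.2 else 0)
          (fun (qc : QD × C) e => if e = η qc.1 then 1 else 0) (q0D, c0) l else 0)
    have R := sum_ofFn_succ (X := A) t
      (fun l => (if daaRun δ η θ (q0D, v0) l = (q, v) then 1 else 0) *
        textWeight φ c0 l c)
    rw [paaF] at *
    rw [L, R]
    clear L R
    have collapseE : ∀ (P : E → Prop) [DecidablePred P] (a : E) (K R : ℝ),
        (∑ e : E, if P e then K * (if e = a then (1:ℝ) else 0) * R else 0)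
          = if P a then K * R else 0 := by
      intro P _ a K R
      have h : ∀ e : E, (if P e then K * (if e = a then (1:ℝ) else 0) * R else 0)
          = if e = a then (if P e then K * R else 0) else 0 := by
        intro e
        by_cases he : e = a <;> by_cases hp : P e <;> simp [he, hp]
      simp only [h]
      simp [Finset.sum_ite_eq']
    have lhs_eq : (∑ x : (QD × C) × E,
        ∑ τ : Fin t → (QD × C) × E,
          if trajState (q0D, c0) (x :: List.ofFn τ) = (q, c) ∧
              trajValue (fun (qc : QD × C) v e => θ qc.1 v e) v0 (x :: List.ofFn τ) = v
          then trajProb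
            (fun qc qc' => ∑ σ : A, if δ qc.1 σ = qc'.1 then φ qc.2 σ qc'.2 else 0)
            (fun (qc : QD × C) e => if e = η qc.1 then 1 else 0) (q0D, c0)
            (x :: List.ofFn τ) else 0)
        = ∑ qc : QD × C,
            (∑ σ : A, if δ q0D σ = qc.1 then φ c0 σ qc.2 else 0) *
            paaF
              (fun qc qc' => ∑ σ : A, if δ qc.1 σ = qc'.1 then φ qc.2 σ qc'.2 else 0)
              (fun (qc : QD × C) e => if e = η qc.1 then 1 else 0)
              (fun (qc : QD × C) v e => θ qc.1 v e)
              qc (θ qc.1 v0 (η qc.1)) t (q, c) v := by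
      rw [Fintype.sum_prod_type]
      refine Finset.sum_congr rfl fun qc _ => ?_
      rw [Finset.sum_comm, paaF, Finset.mul_sum]
      refine Finset.sum_congr rfl fun τ _ => ?_
      simp only [trajState, trajValue, trajProb]
      rw [collapseE _ (η qc.1)]
      split_ifs <;> ring
    have rhs_eq : (∑ x : A,
        ∑ τ : Fin t → A,
          (if daaRun δ η θ (q0D, v0) (x :: List.ofFn τ) = (q, v) then 1 else 0) *
            textWeight φ c0 (x :: List.ofFn τ) c)
        = ∑ σ : A, ∑ c1 : C, φ c0 σ c1 *
            paaF
              (fun qc qc' => ∑ σ : A, if δ qc.1 σ = qc'.1 then φ qc.2 σ qc'.2 else 0)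
              (fun (qc : QD × C) e => if e = η qc.1 then 1 else 0)
              (fun (qc : QD × C) v e => θ qc.1 v e)
              (δ q0D σ, c1) (θ (δ q0D σ) v0 (η (δ q0D σ))) t (q, c) v := by
      refine Finset.sum_congr rfl fun σ _ => ?_
      have hrun : ∀ τ : Fin t → A, daaRun δ η θ (q0D, v0) (σ :: List.ofFn τ)
          = daaRun δ η θ (δ q0D σ, θ (δ q0D σ) v0 (η (δ q0D σ))) (List.ofFn τ) := by
        intro τ
        simp [daaRun, daaStep]
      have htw : ∀ τ : Fin t → A, textWeight φ c0 (σ :: List.ofFn τ) c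
          = ∑ c1 : C, φ c0 σ c1 * textWeight φ c1 (List.ofFn τ) c := by
        intro τ; rfl
      calc (∑ τ : Fin t → A,
            (if daaRun δ η θ (q0D, v0) (σ :: List.ofFn τ) = (q, v) then 1 else 0) *
              textWeight φ c0 (σ :: List.ofFn τ) c)
          = ∑ τ : Fin t → A, ∑ c1 : C, φ c0 σ c1 *
              ((if daaRun δ η θ (δ q0D σ, θ (δ q0D σ) v0 (η (δ q0D σ)))
                  (List.ofFn τ) = (q, v) then 1 else 0) *
                textWeight φ c1 (List.ofFn τ) c) := by
            refine Finset.sum_congr rfl fun τ _ => ?_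
            rw [hrun, htw, Finset.mul_sum]
            refine Finset.sum_congr rfl fun c1 _ => ?_
            ring
        _ = ∑ c1 : C, φ c0 σ c1 *
              ∑ τ : Fin t → A,
                (if daaRun δ η θ (δ q0D σ, θ (δ q0D σ) v0 (η (δ q0D σ)))
                    (List.ofFn τ) = (q, v) then 1 else 0) *
                  textWeight φ c1 (List.ofFn τ) c := by
            rw [Finset.sum_comm]
            simp [Finset.mul_sum]
        _ = _ := by
            refine Finset.sum_congr rfl fun c1 _ => ?_
            rw [← ih (δ q0D σ) c1 (θ (δ q0D σ) v0 (η (δ q0D σ)))]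
    rw [lhs_eq, rhs_eq]
    rw [Fintype.sum_prod_type]
    simp only [Finset.sum_mul, ite_mul, zero_mul]
    have tripleswap : ∀ (F : QD → C → A → ℝ),
        (∑ q1 : QD, ∑ c1 : C, ∑ σ : A, F q1 c1 σ)
          = ∑ σ : A, ∑ c1 : C, ∑ q1 : QD, F q1 c1 σ := by
      intro F
      calc (∑ q1 : QD, ∑ c1 : C, ∑ σ : A, F q1 c1 σ)
          = ∑ q1 : QD, ∑ σ : A, ∑ c1 : C, F q1 c1 σ :=
            Finset.sum_congr rfl fun _ _ => Finset.sum_comm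
        _ = ∑ σ : A, ∑ q1 : QD, ∑ c1 : C, F q1 c1 σ := Finset.sum_comm
        _ = ∑ σ : A, ∑ c1 : C, ∑ q1 : QD, F q1 c1 σ :=
            Finset.sum_congr rfl fun _ _ => Finset.sum_comm
    refine (tripleswap _).trans ?_
    refine Finset.sum_congr rfl fun σ _ => ?_
    refine Finset.sum_congr rfl fun c1 _ => ?_
    simp [Finset.sum_ite_eq]

/-- Correctness of the PAA constructed from a DAA and a finite-memory text model:
`P(Q_t = (q,c), V_t = v) = Σ_{s ∈ Σ^t} [δ̂((q0,v0),s) = (q,v)] · P(S_0…S_{t-1} = s, C_t = c)`,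
so that in particular `L(V_t) = L(value_D(S_0…S_{t-1}))`. -/
theorem paa_from_daa_and_text_model_correct {A QD C V E : Type}
    [Fintype A] [Fintype QD] [Fintype C] [Fintype E]
    [DecidableEq A] [DecidableEq QD] [DecidableEq C] [DecidableEq V] [DecidableEq E]
    (δ : QD → A → QD) (η : QD → E) (θ : QD → V → E → V) (q0D : QD) (v0 : V)
    (φ : C → A → C → ℝ) (c0 : C)
    (hφ0 : ∀ c σ c', 0 ≤ φ c σ c') (hφ1 : ∀ c, (∑ σ : A, ∑ c' : C, φ c σ c') = 1)
    (t : ℕ) (q : QD) (c : C) (v : V) :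
    paaF
      (fun qc qc' => ∑ σ : A, if δ qc.1 σ = qc'.1 then φ qc.2 σ qc'.2 else 0)
      (fun qc e => if e = η qc.1 then 1 else 0)
      (fun qc v e => θ qc.1 v e)
      (q0D, c0) v0 t (q, c) v =
    ∑ s : Fin t → A,
      (if daaRun δ η θ (q0D, v0) (List.ofFn s) = (q, v) then 1 else 0) *
        textWeight φ c0 (List.ofFn s) c :=
  paa_key δ η θ φ q c v t q0D c0 v0
end
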